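/- arXiv:math/0702806 — 3 statements merged into one kernel-verified Lean document; each statement's English description precedes it below -/
import Mathlib

section
/- Let ψ : [0,∞) → [0,∞) be a bounded non-increasing function with ∫₀^∞ ψ(x) dx < ∞. Then there exist a constant C < ∞ and a non-decreasing C² function M : (-∞,0] → [0,1] with M ≥ 0, M'' ≥ 0 and M·M'' ≥ (M')² pointwise, such that ψ(x) ≤ C·M'(-x) for all x ≥ 0. -/
/-!
Extend `ψ` by `ψ 0` to the left and average it twice over the unit windows `[x - 1, x]`: each
average dominates the function it averages and is dominated by that function shifted by one, so
this yields a `C¹`, non-increasing majorant `g ≤ ψ (· - 2)` of `ψ` that is still integrable on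
`(0, ∞)`. Then `M y = exp (-∫₀^{-y} g)` works: `(log M)'' y = -g' (-y) ≥ 0` is the inequality
`M M'' ≥ M'²`, and `M' (-x) = g x · exp (-∫₀ˣ g) ≥ g x · exp (-∫₀^∞ g)`.
-/

open MeasureTheory intervalIntegral Set

noncomputable def backwardAverage (f : ℝ → ℝ) (x : ℝ) : ℝ := ∫ t in (x - 1)..x, f t

section BackwardAverage

variable {f : ℝ → ℝ}

lemma backwardAverage_nonneg (hf : ∀ x, 0 ≤ f x) (x : ℝ) : 0 ≤ backwardAverage f x :=
  integral_nonneg (by linarith) fun t _ => hf t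

lemma Antitone.le_backwardAverage (hf : Antitone f) (x : ℝ) : f x ≤ backwardAverage f x := by
  simpa [backwardAverage] using integral_mono_on (by linarith : x - 1 ≤ x)
    (intervalIntegrable_const (μ := volume)) hf.intervalIntegrable fun t ht => hf ht.2

lemma Antitone.backwardAverage_le (hf : Antitone f) (x : ℝ) : backwardAverage f x ≤ f (x - 1) := by
  simpa [backwardAverage] using integral_mono_on (by linarith : x - 1 ≤ x)
    hf.intervalIntegrable (intervalIntegrable_const (μ := volume)) fun t ht => hf ht.1

lemma Antitone.antitone_backwardAverage (hf : Antitone f) : Antitone (backwardAverage f) := by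
  intro a b hab
  have hshift : Antitone fun t => f (t + (b - a)) := fun u v huv => hf (by linarith)
  calc backwardAverage f b = ∫ t in (a - 1)..a, f (t + (b - a)) := by
        rw [integral_comp_add_right, backwardAverage]; congr 1 <;> ring
    _ ≤ backwardAverage f a :=
        integral_mono_on (by linarith) hshift.intervalIntegrable hf.intervalIntegrable
          fun t _ => hf (by linarith)

lemma backwardAverage_eq_sub (hf : ∀ a b, IntervalIntegrable f volume a b) :
    backwardAverage f = fun x => (∫ t in (0 : ℝ)..x, f t) - ∫ t in (0 : ℝ)..(x - 1), f t := by
  funext x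
  rw [integral_interval_sub_left (hf 0 x) (hf 0 (x - 1)), backwardAverage]

lemma continuous_backwardAverage (hf : ∀ a b, IntervalIntegrable f volume a b) :
    Continuous (backwardAverage f) := by
  rw [backwardAverage_eq_sub hf]
  exact (continuous_primitive hf 0).sub
    ((continuous_primitive hf 0).comp (continuous_sub_right 1))

lemma hasDerivAt_backwardAverage (hf : Continuous f) (x : ℝ) :
    HasDerivAt (backwardAverage f) (f x - f (x - 1)) x := by
  rw [backwardAverage_eq_sub hf.intervalIntegrable]
  have hprim (b : ℝ) := (hf.integral_hasStrictDerivAt 0 b).hasDerivAt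
  exact (hprim x).sub ((hprim (x - 1)).comp_sub_const x 1)

lemma contDiff_one_backwardAverage (hf : Continuous f) : ContDiff ℝ 1 (backwardAverage f) := by
  rw [contDiff_one_iff_deriv]
  refine ⟨fun x => (hasDerivAt_backwardAverage hf x).differentiableAt, ?_⟩
  rw [funext fun x => (hasDerivAt_backwardAverage hf x).deriv]
  exact hf.sub (hf.comp (continuous_sub_right 1))

end BackwardAverage

section Extension

variable {ψ : ℝ → ℝ}

lemma AntitoneOn.antitone_comp_max_zero (hψ : AntitoneOn ψ (Ici 0)) :
    Antitone fun x => ψ (max x 0) := fun _ _ hab =>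
  hψ (mem_Ici.2 (le_max_right _ _)) (mem_Ici.2 (le_max_right _ _)) (max_le_max hab le_rfl)

lemma AntitoneOn.integrableOn_Ioi_comp_max_zero (hψ : AntitoneOn ψ (Ici 0))
    (hint : IntegrableOn ψ (Ici 0)) (a : ℝ) : IntegrableOn (fun x => ψ (max x 0)) (Ioi a) := by
  have hleft : IntegrableOn (fun x => ψ (max x 0)) (Icc a 0) :=
    (hψ.antitone_comp_max_zero.antitoneOn _).integrableOn_isCompact isCompact_Icc
  have hright : IntegrableOn (fun x => ψ (max x 0)) (Ioi 0) :=
    (hint.mono_set Ioi_subset_Ici_self).congr_fun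
      (fun x (hx : 0 < x) => by simp [max_eq_left hx.le]) measurableSet_Ioi
  refine (hleft.union hright).mono_set fun x hx => ?_
  rcases le_or_gt x 0 with h | h
  · exact Or.inl ⟨hx.le, h⟩
  · exact Or.inr h

end Extension

lemma exists_contDiff_antitone_integrableOn_majorant {ψ : ℝ → ℝ} (hψ0 : ∀ x ≥ 0, 0 ≤ ψ x)
    (hψmono : AntitoneOn ψ (Ici 0)) (hψint : IntegrableOn ψ (Ici 0)) :
    ∃ g : ℝ → ℝ, ContDiff ℝ 1 g ∧ Antitone g ∧ (∀ x, 0 ≤ g x) ∧ IntegrableOn g (Ioi 0) ∧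
      ∀ x ≥ 0, ψ x ≤ g x := by
  set ψ₀ : ℝ → ℝ := fun x => ψ (max x 0)
  have h₀ : Antitone ψ₀ := hψmono.antitone_comp_max_zero
  have h₀nonneg (x : ℝ) : 0 ≤ ψ₀ x := hψ0 _ (le_max_right _ _)
  have h₁ : Antitone (backwardAverage ψ₀) := h₀.antitone_backwardAverage
  have hg : ContDiff ℝ 1 (backwardAverage (backwardAverage ψ₀)) :=
    contDiff_one_backwardAverage (continuous_backwardAverage fun _ _ => h₀.intervalIntegrable)
  have hgnonneg := backwardAverage_nonneg (backwardAverage_nonneg h₀nonneg)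
  refine ⟨_, hg, h₁.antitone_backwardAverage, hgnonneg, ?_, fun x hx => ?_⟩
  · have hshift : IntegrableOn (fun t => ψ₀ (t - 2)) (Ioi 0) := by
      have := ((measurePreserving_sub_right volume (2 : ℝ)).integrableOn_comp_preimage
        (measurableEmbedding_subRight 2) (s := Ioi (-2))).2
        (hψmono.integrableOn_Ioi_comp_max_zero hψint (-2))
      rwa [preimage_sub_const_Ioi, neg_add_cancel] at this
    refine hshift.mono' hg.continuous.aestronglyMeasurable.restrict (.of_forall fun t => ?_)
    rw [Real.norm_of_nonneg (hgnonneg t)]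
    calc backwardAverage (backwardAverage ψ₀) t
        _ ≤ backwardAverage ψ₀ (t - 1) := h₁.backwardAverage_le t
        _ ≤ ψ₀ (t - 1 - 1) := h₀.backwardAverage_le _
        _ = ψ₀ (t - 2) := by ring_nf
  · calc ψ x = ψ₀ x := by simp [ψ₀, max_eq_left hx]
      _ ≤ backwardAverage ψ₀ x := h₀.le_backwardAverage x
      _ ≤ _ := h₁.le_backwardAverage x

lemma intervalIntegral_le_setIntegral_Ioi {g : ℝ → ℝ} {a x : ℝ} (hg : IntegrableOn g (Ioi a))
    (hg0 : ∀ t > a, 0 ≤ g t) (hx : a ≤ x) : ∫ t in a..x, g t ≤ ∫ t in Ioi a, g t := by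
  rw [integral_of_le hx]
  exact setIntegral_mono_set hg ((ae_restrict_mem measurableSet_Ioi).mono hg0)
    Ioc_subset_Ioi_self.eventuallyLE

lemma contDiff_primitive {g : ℝ → ℝ} {n : ℕ} (hg : ContDiff ℝ n g) (a : ℝ) :
    ContDiff ℝ (n + 1) fun x => ∫ t in a..x, g t := by
  have hcont := hg.continuous
  rw [contDiff_succ_iff_deriv]
  refine ⟨fun x => (hcont.integral_hasStrictDerivAt a x).hasDerivAt.differentiableAt, by simp, ?_⟩
  rwa [funext (hcont.deriv_integral g a)]

noncomputable def expNegIntegral (g : ℝ → ℝ) (y : ℝ) : ℝ := Real.exp (-∫ t in (0 : ℝ)..(-y), g t)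

section ExpNegIntegral

variable {g : ℝ → ℝ}

lemma expNegIntegral_pos (g : ℝ → ℝ) (y : ℝ) : 0 < expNegIntegral g y := Real.exp_pos _

lemma expNegIntegral_le_one (hg : ∀ x, 0 ≤ g x) {y : ℝ} (hy : y ≤ 0) : expNegIntegral g y ≤ 1 :=
  Real.exp_le_one_iff.2 (neg_nonpos.2 (integral_nonneg (by linarith) fun t _ => hg t))

lemma contDiff_two_expNegIntegral (hg : ContDiff ℝ 1 g) : ContDiff ℝ 2 (expNegIntegral g) :=
  ((contDiff_primitive hg 0).comp contDiff_neg).neg.exp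

lemma hasDerivAt_expNegIntegral (hg : Continuous g) (y : ℝ) :
    HasDerivAt (expNegIntegral g) (g (-y) * expNegIntegral g y) y := by
  have hexponent : HasDerivAt (fun y => -∫ t in (0 : ℝ)..(-y), g t) (g (-y)) y :=
    ((hg.integral_hasStrictDerivAt 0 (-y)).hasDerivAt.comp y (hasDerivAt_neg y)).neg.congr_deriv
      (by ring)
  exact hexponent.exp.congr_deriv (mul_comm _ _)

lemma deriv_expNegIntegral (hg : Continuous g) :
    deriv (expNegIntegral g) = fun y => g (-y) * expNegIntegral g y :=
  funext fun y => (hasDerivAt_expNegIntegral hg y).deriv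

lemma deriv_deriv_expNegIntegral (hg : Differentiable ℝ g) (y : ℝ) :
    deriv (deriv (expNegIntegral g)) y = (g (-y) ^ 2 - deriv g (-y)) * expNegIntegral g y := by
  rw [deriv_expNegIntegral hg.continuous]
  have hprod : HasDerivAt (fun y => g (-y) * expNegIntegral g y)
      (-deriv g (-y) * expNegIntegral g y + g (-y) * (g (-y) * expNegIntegral g y)) y :=
    (((hg (-y)).hasDerivAt.comp y (hasDerivAt_neg y)).mul
      (hasDerivAt_expNegIntegral hg.continuous y)).congr_deriv (by rw [Function.comp_apply]; ring)
  rw [hprod.deriv]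
  ring

lemma monotone_expNegIntegral (hg : Continuous g) (hg0 : ∀ x, 0 ≤ g x) :
    Monotone (expNegIntegral g) :=
  monotone_of_deriv_nonneg (fun y => (hasDerivAt_expNegIntegral hg y).differentiableAt)
    fun y => (hasDerivAt_expNegIntegral hg y).deriv ▸
      mul_nonneg (hg0 _) (expNegIntegral_pos g y).le

lemma deriv_deriv_expNegIntegral_nonneg (hg : Differentiable ℝ g) (hanti : Antitone g) (y : ℝ) :
    0 ≤ deriv (deriv (expNegIntegral g)) y := by
  rw [deriv_deriv_expNegIntegral hg]
  exact mul_nonneg (by nlinarith [sq_nonneg (g (-y)), hanti.deriv_nonpos (x := -y)])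
    (expNegIntegral_pos g y).le

lemma sq_deriv_expNegIntegral_le (hg : Differentiable ℝ g) (hanti : Antitone g) (y : ℝ) :
    deriv (expNegIntegral g) y ^ 2 ≤ expNegIntegral g y * deriv (deriv (expNegIntegral g)) y := by
  rw [deriv_deriv_expNegIntegral hg, deriv_expNegIntegral hg.continuous]
  nlinarith [mul_nonneg (neg_nonneg.2 (hanti.deriv_nonpos (x := -y)))
    (sq_nonneg (expNegIntegral g y))]

lemma le_exp_mul_deriv_expNegIntegral (hg : Continuous g) (hg0 : ∀ x, 0 ≤ g x)
    (hint : IntegrableOn g (Ioi 0)) {x : ℝ} (hx : 0 ≤ x) :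
    g x ≤ Real.exp (∫ t in Ioi 0, g t) * deriv (expNegIntegral g) (-x) := by
  have hG := intervalIntegral_le_setIntegral_Ioi hint (fun t _ => hg0 t) hx
  simp only [deriv_expNegIntegral hg, expNegIntegral, neg_neg]
  rw [mul_left_comm, ← Real.exp_add]
  exact le_mul_of_one_le_right (hg0 x) (Real.one_le_exp (by linarith))

end ExpNegIntegral

theorem stmt4_general (ψ : ℝ → ℝ) (hψ0 : ∀ x ≥ (0:ℝ), 0 ≤ ψ x)
    (hψmono : AntitoneOn ψ (Set.Ici 0))
    (hψint : IntegrableOn ψ (Set.Ici 0)) :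
    ∃ (C : ℝ) (M : ℝ → ℝ), ContDiff ℝ 2 M ∧
      MonotoneOn M (Set.Iic 0) ∧
      (∀ x ≤ (0:ℝ), 0 ≤ M x ∧ M x ≤ 1) ∧
      (∀ x ≤ (0:ℝ), 0 ≤ deriv (deriv M) x) ∧
      (∀ x ≤ (0:ℝ), (deriv M x)^2 ≤ M x * deriv (deriv M) x) ∧
      (∀ x ≥ (0:ℝ), ψ x ≤ C * deriv M (-x)) := by
  obtain ⟨g, hg, hanti, hg0, hint, hψg⟩ :=
    exists_contDiff_antitone_integrableOn_majorant hψ0 hψmono hψint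
  have hdiff : Differentiable ℝ g := hg.differentiable one_ne_zero
  refine ⟨Real.exp (∫ t in Ioi 0, g t), expNegIntegral g, contDiff_two_expNegIntegral hg,
    (monotone_expNegIntegral hg.continuous hg0).monotoneOn _,
    fun y hy => ⟨(expNegIntegral_pos g y).le, expNegIntegral_le_one hg0 hy⟩,
    fun y _ => deriv_deriv_expNegIntegral_nonneg hdiff hanti y,
    fun y _ => sq_deriv_expNegIntegral_le hdiff hanti y,
    fun x hx => (hψg x hx).trans (le_exp_mul_deriv_expNegIntegral hg.continuous hg0 hint hx)⟩

/-- Nazarov's lemma: for `ψ` bounded, non-increasing, integrable on `ℝ₊`,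
there are `C < ∞` and a non-decreasing C² function `M : (-∞,0] → [0,1]` with
`[[M,M'],[M',M'']] ≥ 0` pointwise, such that `ψ(x) ≤ C·M'(-x)` for all `x ≥ 0`. -/
theorem stmt4 (ψ : ℝ → ℝ) (hψ0 : ∀ x ≥ (0:ℝ), 0 ≤ ψ x)
    (hψbdd : ∃ C, ∀ x ≥ (0:ℝ), ψ x ≤ C)
    (hψmono : AntitoneOn ψ (Set.Ici 0))
    (hψint : IntegrableOn ψ (Set.Ici 0)) :
    ∃ (C : ℝ) (M : ℝ → ℝ), ContDiff ℝ 2 M ∧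
      MonotoneOn M (Set.Iic 0) ∧
      (∀ x ≤ (0:ℝ), 0 ≤ M x ∧ M x ≤ 1) ∧
      (∀ x ≤ (0:ℝ), 0 ≤ deriv (deriv M) x) ∧
      (∀ x ≤ (0:ℝ), (deriv M x)^2 ≤ M x * deriv (deriv M) x) ∧
      (∀ x ≥ (0:ℝ), ψ x ≤ C * deriv M (-x)) :=
  stmt4_general ψ hψ0 hψmono hψint
end

section
/- Let H be a Hilbert space and Π a C² smooth operator-valued function of one complex variable whose values are orthogonal projections, satisfying Π·∂Π = 0 pointwise. Then ∂∂̄Π = (∂Π)(∂Π)* − (∂Π)*(∂Π), where ∂̄Π = (∂Π)*. -/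
open Complex

/-- Wirtinger derivative `∂ = ½(∂/∂x − i·∂/∂y)`. -/
noncomputable def wD {F : Type*} [NormedAddCommGroup F] [NormedSpace ℂ F]
    (f : ℂ → F) (z : ℂ) : F :=
  (2:ℂ)⁻¹ • (fderiv ℝ f z 1 - Complex.I • fderiv ℝ f z Complex.I)

/-- Conjugate Wirtinger derivative `∂̄ = ½(∂/∂x + i·∂/∂y)`. -/
noncomputable def wDb {F : Type*} [NormedAddCommGroup F] [NormedSpace ℂ F]
    (f : ℂ → F) (z : ℂ) : F :=
  (2:ℂ)⁻¹ • (fderiv ℝ f z 1 + Complex.I • fderiv ℝ f z Complex.I)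

/-!
Self-adjointness of `Π` gives `∂̄Π = (∂Π)*`; taking adjoints in `Π ∂Π = 0` gives `∂̄Π Π = 0`, so
differentiating `Π² = Π` yields `Π ∂̄Π = ∂̄Π`. Applying `∂̄` to `Π ∂Π = 0` and `∂` to `Π ∂̄Π = ∂̄Π`,
then using `∂∂̄ = ∂̄∂` for `C²` functions, one eliminates `Π ∂∂̄Π` between the two identities.
-/

open Filter Topology

section Wirtinger

variable {F : Type*} [NormedAddCommGroup F] [NormedSpace ℂ F] {f g : ℂ → F} {z : ℂ}

theorem Filter.EventuallyEq.wD_eq (h : f =ᶠ[𝓝 z] g) : wD f z = wD g z := by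
  simp only [wD, h.fderiv_eq]

theorem Filter.EventuallyEq.wDb_eq (h : f =ᶠ[𝓝 z] g) : wDb f z = wDb g z := by
  simp only [wDb, h.fderiv_eq]

@[simp]
theorem wDb_zero : wDb (0 : ℂ → F) z = 0 := by
  simp [wDb]

theorem hasFDerivAt_wD (hf : DifferentiableAt ℝ (fderiv ℝ f) z) :
    HasFDerivAt (wD f) ((2:ℂ)⁻¹ • ((ContinuousLinearMap.apply ℝ F 1).comp (fderiv ℝ (fderiv ℝ f) z)
      - I • (ContinuousLinearMap.apply ℝ F I).comp (fderiv ℝ (fderiv ℝ f) z))) z :=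
  have h v := (ContinuousLinearMap.apply ℝ F v).hasFDerivAt.comp z hf.hasFDerivAt
  ((h 1).sub ((h I).const_smul I)).const_smul (2:ℂ)⁻¹

theorem hasFDerivAt_wDb (hf : DifferentiableAt ℝ (fderiv ℝ f) z) :
    HasFDerivAt (wDb f) ((2:ℂ)⁻¹ • ((ContinuousLinearMap.apply ℝ F 1).comp (fderiv ℝ (fderiv ℝ f) z)
      + I • (ContinuousLinearMap.apply ℝ F I).comp (fderiv ℝ (fderiv ℝ f) z))) z :=
  have h v := (ContinuousLinearMap.apply ℝ F v).hasFDerivAt.comp z hf.hasFDerivAt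
  ((h 1).add ((h I).const_smul I)).const_smul (2:ℂ)⁻¹

theorem ContDiffAt.differentiableAt_fderiv (hf : ContDiffAt ℝ 2 f z) :
    DifferentiableAt ℝ (fderiv ℝ f) z :=
  (hf.fderiv_right (m := 1) (by norm_num)).differentiableAt (by norm_num)

theorem wD_wDb_comm (hf : ContDiffAt ℝ 2 f z) : wD (wDb f) z = wDb (wD f) z := by
  have hsymm := hf.isSymmSndFDerivAt (by simp [minSmoothness_of_isRCLikeNormedField]) 1 I
  simp only [wD, wDb, (hasFDerivAt_wD hf.differentiableAt_fderiv).fderiv,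
    (hasFDerivAt_wDb hf.differentiableAt_fderiv).fderiv, smul_apply,
    add_apply, sub_apply, ContinuousLinearMap.comp_apply, ContinuousLinearMap.apply_apply,
    hsymm]
  module

end Wirtinger

section Star

variable {F : Type*} [NormedAddCommGroup F] [NormedSpace ℂ F] [StarAddMonoid F] [StarModule ℂ F]
  [ContinuousStar F] {f : ℂ → F} {z : ℂ}

theorem star_wD : star (wD f z) = wDb (fun w => star (f w)) z := by
  simp only [wD, wDb, fderiv_star, ContinuousLinearMap.comp_apply, ContinuousLinearEquiv.coe_coe,
    starL'_apply, star_smul, star_sub, star_inv₀, star_ofNat, RCLike.star_def, conj_I]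
  module

end Star

section Algebra

variable {𝔸 : Type*} [NormedRing 𝔸] [NormedAlgebra ℂ 𝔸] {a b : ℂ → 𝔸} {z : ℂ}

theorem wD_mul (ha : DifferentiableAt ℝ a z) (hb : DifferentiableAt ℝ b z) :
    wD (fun w => a w * b w) z = wD a z * b z + a z * wD b z := by
  simp only [wD, fderiv_fun_mul' ha hb, add_apply, smul_apply,
    smul_eq_mul, op_smul_eq_mul, mul_sub, sub_mul, mul_smul_comm, smul_mul_assoc]
  module

theorem wDb_mul (ha : DifferentiableAt ℝ a z) (hb : DifferentiableAt ℝ b z) :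
    wDb (fun w => a w * b w) z = wDb a z * b z + a z * wDb b z := by
  simp only [wDb, fderiv_fun_mul' ha hb, add_apply, smul_apply,
    smul_eq_mul, op_smul_eq_mul, mul_add, add_mul, mul_smul_comm, smul_mul_assoc]
  module

theorem wD_wDb_eq_of_mul_wD_eq_zero {f : ℂ → 𝔸} (hf : ContDiffAt ℝ 2 f z)
    (h₁ : (fun w => f w * wD f w) =ᶠ[𝓝 z] 0) (h₂ : (fun w => f w * wDb f w) =ᶠ[𝓝 z] wDb f) :
    wD (wDb f) z = wD f z * wDb f z - wDb f z * wD f z := by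
  have hf₁ : DifferentiableAt ℝ f z := hf.differentiableAt (by norm_num)
  have hf₂ := hf.differentiableAt_fderiv
  have hdbar : wDb f z * wD f z + f z * wD (wDb f) z = 0 := by
    rw [wD_wDb_comm hf, ← wDb_mul hf₁ (hasFDerivAt_wD hf₂).differentiableAt, h₁.wDb_eq, wDb_zero]
  have hd : wD f z * wDb f z + f z * wD (wDb f) z = wD (wDb f) z := by
    rw [← wD_mul hf₁ (hasFDerivAt_wDb hf₂).differentiableAt, h₂.wD_eq]
  rw [← hd, eq_neg_of_add_eq_zero_right hdbar]
  abel

end Algebra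

section StarAlgebra

variable {𝔸 : Type*} [NormedRing 𝔸] [NormedAlgebra ℂ 𝔸] [StarRing 𝔸] [StarModule ℂ 𝔸]
  [ContinuousStar 𝔸] {f : ℂ → 𝔸} {z : ℂ}

theorem wDb_eq_star_wD (hsa : ∀ᶠ w in 𝓝 z, IsSelfAdjoint (f w)) : wDb f z = star (wD f z) := by
  have hstar : (fun w => star (f w)) =ᶠ[𝓝 z] f := hsa.mono fun w hw => hw.star_eq
  rw [star_wD, hstar.wDb_eq]

theorem mul_wDb_eq_wDb (hf : DifferentiableAt ℝ f z) (hsa : ∀ᶠ w in 𝓝 z, IsSelfAdjoint (f w))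
    (hidem : ∀ᶠ w in 𝓝 z, IsIdempotentElem (f w)) (h : f z * wD f z = 0) :
    f z * wDb f z = wDb f z := by
  have hright : wDb f z * f z = 0 := by
    rw [wDb_eq_star_wD hsa, ← hsa.self_of_nhds.star_eq, ← star_mul, h, star_zero]
  have hsq : (fun w => f w * f w) =ᶠ[𝓝 z] f := hidem.mono fun w hw => hw.eq
  simpa [hsq.wDb_eq, hright] using (wDb_mul hf hf).symm

end StarAlgebra

/-- if `Π` is C², projection-valued, `Π·∂Π = 0`, then
`∂∂̄Π = (∂Π)(∂Π)* − (∂Π)*(∂Π)` (with `∂̄Π = (∂Π)*`). -/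
theorem stmt6 {H : Type*} [NormedAddCommGroup H] [InnerProductSpace ℂ H] [CompleteSpace H]
    (U : Set ℂ) (hU : IsOpen U) (P : ℂ → H →L[ℂ] H)
    (hsm : ContDiffOn ℝ 2 P U)
    (hproj : ∀ z ∈ U, (P z) ∘L (P z) = P z)
    (hsa : ∀ z ∈ U, ContinuousLinearMap.adjoint (P z) = P z)
    (hPdP : ∀ z ∈ U, (P z) ∘L (wD P z) = 0) :
    ∀ z ∈ U,
      wDb P z = ContinuousLinearMap.adjoint (wD P z) ∧
      wD (fun w => wDb P w) z =
        (wD P z) ∘L (ContinuousLinearMap.adjoint (wD P z))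
          - (ContinuousLinearMap.adjoint (wD P z)) ∘L (wD P z) := by
  have hsaNhds (w : ℂ) (hw : w ∈ U) : ∀ᶠ v in 𝓝 w, IsSelfAdjoint (P v) :=
    eventually_of_mem (hU.mem_nhds hw) fun v hv => (P v).isSelfAdjoint_iff'.2 (hsa v hv)
  have hmul (w : ℂ) (hw : w ∈ U) : P w * wDb P w = wDb P w :=
    mul_wDb_eq_wDb ((hsm.contDiffAt (hU.mem_nhds hw)).differentiableAt (by norm_num)) (hsaNhds w hw)
      (eventually_of_mem (hU.mem_nhds hw) hproj) (hPdP w hw)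
  intro z hz
  rw [← ContinuousLinearMap.star_eq_adjoint, ← wDb_eq_star_wD (hsaNhds z hz)]
  exact ⟨rfl, wD_wDb_eq_of_mul_wD_eq_zero (hsm.contDiffAt (hU.mem_nhds hz))
    (eventually_of_mem (hU.mem_nhds hz) hPdP) (eventually_of_mem (hU.mem_nhds hz) hmul)⟩
end

section
/- Let M : (-∞, 0] → ℝ be C² with M ≥ 0, M' ≥ 0, M'' ≥ 0 and M·M'' ≥ (M')², and let u ≤ 0 be a C² subharmonic function on a domain. Then for any Hilbert-space-valued holomorphic function h, the function z ↦ M(u(z))·‖h(z)‖² satisfies Δ(M(u)‖h‖²) ≥ M'(u)·Δu·‖h‖² pointwise, where Δ = ∂∂̄. -/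
/-!
Write `φ = ‖h‖²`. By the product and chain rules, for every real direction `v`,
`D²ᵥ(M(u)φ) = M''(u)(Dᵥu)²φ + M'(u)(D²ᵥu)φ + 2M'(u)(Dᵥu)(Dᵥφ) + M(u)D²ᵥφ`.
Summed over `v = 1, i`, the second term is `4 M'(u) Δu φ`. Holomorphy of `h` gives
`D²₁φ + D²ᵢφ = 4‖h'‖²` and, by Cauchy–Schwarz, `(D₁φ)² + (Dᵢφ)² ≤ 4‖h'‖²‖h‖²`; so the
other three terms are the trace of the product of the positive semidefinite matrices
`[[M, M'], [M', M'']]` and `[[4‖h'‖², X], [X, |∇u|²‖h‖²]]` with `X = D₁u D₁φ + Dᵢu Dᵢφ`,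
hence nonnegative.
-/

open Complex
open scoped InnerProductSpace

/-- Normalized Laplacian `Δ = ∂∂̄`. -/
noncomputable def lap {F : Type*} [NormedAddCommGroup F] [NormedSpace ℂ F]
    (f : ℂ → F) (z : ℂ) : F :=
  wD (fun w => wDb f w) z

open Filter Topology

section SecondDirDeriv

variable {E : Type*} [NormedAddCommGroup E] [NormedSpace ℝ E]

noncomputable def secondDirDeriv (g : E → ℝ) (z v : E) : ℝ :=
  fderiv ℝ (fun w => fderiv ℝ g w v) z v

variable {f g : E → ℝ} {z : E}

lemma ContDiffAt.eventually_differentiableAt (hf : ContDiffAt ℝ 2 f z) :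
    ∀ᶠ w in 𝓝 z, DifferentiableAt ℝ f w :=
  (hf.eventually (by simp)).mono fun _ hw => hw.differentiableAt two_ne_zero

lemma ContDiffAt.differentiableAt_fderiv_apply (hf : ContDiffAt ℝ 2 f z) (v : E) :
    DifferentiableAt ℝ (fun w => fderiv ℝ f w v) z :=
  ((hf.fderiv_right le_rfl).differentiableAt one_ne_zero).clm_apply (differentiableAt_const v)

lemma secondDirDeriv_mul (hf : ContDiffAt ℝ 2 f z) (hg : ContDiffAt ℝ 2 g z) (v : E) :
    secondDirDeriv (fun w => f w * g w) z v =
      secondDirDeriv f z v * g z + 2 * (fderiv ℝ f z v * fderiv ℝ g z v)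
        + f z * secondDirDeriv g z v := by
  have hD : (fun w => fderiv ℝ (fun w => f w * g w) w v) =ᶠ[𝓝 z]
      fun w => fderiv ℝ f w v * g w + f w * fderiv ℝ g w v := by
    filter_upwards [hf.eventually_differentiableAt, hg.eventually_differentiableAt]
      with w hfw hgw
    rw [fderiv_fun_mul hfw hgw]
    simp only [add_apply, smul_apply, smul_eq_mul]
    ring
  have hf1 := (hf.differentiableAt_fderiv_apply v).hasFDerivAt
  have hg1 := (hg.differentiableAt_fderiv_apply v).hasFDerivAt
  have hf0 := (hf.differentiableAt two_ne_zero).hasFDerivAt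
  have hg0 := (hg.differentiableAt two_ne_zero).hasFDerivAt
  rw [secondDirDeriv, hD.fderiv_eq, ((hf1.fun_mul hg0).fun_add (hf0.fun_mul hg1)).fderiv]
  simp only [secondDirDeriv, add_apply, smul_apply, smul_eq_mul]
  ring

lemma fderiv_comp_apply_eq_deriv_mul {M : ℝ → ℝ} {w : E} (hM : DifferentiableAt ℝ M (f w))
    (hf : DifferentiableAt ℝ f w) (v : E) :
    fderiv ℝ (fun w => M (f w)) w v = deriv M (f w) * fderiv ℝ f w v := by
  rw [fderiv_fun_comp w hM hf]
  simp [mul_comm]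

lemma secondDirDeriv_comp {M : ℝ → ℝ} (hM : ContDiff ℝ 2 M) (hf : ContDiffAt ℝ 2 f z)
    (v : E) :
    secondDirDeriv (fun w => M (f w)) z v =
      deriv (deriv M) (f z) * fderiv ℝ f z v ^ 2 + deriv M (f z) * secondDirDeriv f z v := by
  have hM' : Differentiable ℝ (deriv M) :=
    (hM.iterate_deriv' 1 1).differentiable one_ne_zero
  have hD : (fun w => fderiv ℝ (fun w => M (f w)) w v) =ᶠ[𝓝 z]
      fun w => deriv M (f w) * fderiv ℝ f w v := by
    filter_upwards [hf.eventually_differentiableAt] with w hfw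
    exact fderiv_comp_apply_eq_deriv_mul (hM.differentiable two_ne_zero (f w)) hfw v
  have hM1 : HasFDerivAt (fun w => deriv M (f w)) (deriv (deriv M) (f z) • fderiv ℝ f z) z :=
    (hM' (f z)).hasDerivAt.comp_hasFDerivAt z (hf.differentiableAt two_ne_zero).hasFDerivAt
  rw [secondDirDeriv, hD.fderiv_eq,
    (hM1.fun_mul (hf.differentiableAt_fderiv_apply v).hasFDerivAt).fderiv]
  simp only [secondDirDeriv, add_apply, smul_apply, smul_eq_mul]
  ring

end SecondDirDeriv

section Wirtinger

variable {g : ℂ → ℝ} {z : ℂ}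

lemma wDb_ofReal (hg : DifferentiableAt ℝ g z) :
    wDb (fun w => (g w : ℂ)) z = (2:ℂ)⁻¹ * (fderiv ℝ g z 1 + I * fderiv ℝ g z I) := by
  have hD : HasFDerivAt (fun w => (g w : ℂ)) (ofRealCLM.comp (fderiv ℝ g z)) z :=
    ofRealCLM.hasFDerivAt.comp z hg.hasFDerivAt
  simp [wDb, hD.fderiv]

lemma re_lap_ofReal (hg : ContDiffAt ℝ 2 g z) :
    (lap (fun w => (g w : ℂ)) z).re = (secondDirDeriv g z 1 + secondDirDeriv g z I) / 4 := by
  have hwDb : (fun w => wDb (fun w => (g w : ℂ)) w) =ᶠ[𝓝 z]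
      fun w => (2:ℂ)⁻¹ * (fderiv ℝ g w 1 + I * fderiv ℝ g w I) := by
    filter_upwards [hg.eventually_differentiableAt] with w hw using wDb_ofReal hw
  have hD : HasFDerivAt (fun w => (2:ℂ)⁻¹ * (fderiv ℝ g w 1 + I * fderiv ℝ g w I))
      ((2:ℂ)⁻¹ • (ofRealCLM.comp (fderiv ℝ (fun w => fderiv ℝ g w 1) z)
        + I • ofRealCLM.comp (fderiv ℝ (fun w => fderiv ℝ g w I) z))) z :=
    ((ofRealCLM.hasFDerivAt.comp z (hg.differentiableAt_fderiv_apply 1).hasFDerivAt).add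
      ((ofRealCLM.hasFDerivAt.comp z
        (hg.differentiableAt_fderiv_apply I).hasFDerivAt).const_mul I)).const_mul _
  simp only [lap, wD, hwDb.fderiv_eq, hD.fderiv, secondDirDeriv, smul_add, add_apply, smul_apply,
    ContinuousLinearMap.comp_apply, ofRealCLM_apply, smul_eq_mul]
  simp [field, show (4:ℝ) = 2 ^ 2 by norm_num]

end Wirtinger

section NormSq

variable {G : Type*} [NormedAddCommGroup G] [NormedSpace ℝ G]
  {𝕜 : Type*} [RCLike 𝕜] {E : Type*} [NormedAddCommGroup E] [InnerProductSpace 𝕜 E]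
  [NormedSpace ℝ E] {f g : G → E} {x : G}

lemma fderiv_re_inner_apply (hf : DifferentiableAt ℝ f x) (hg : DifferentiableAt ℝ g x)
    (y : G) :
    fderiv ℝ (fun t => RCLike.re ⟪f t, g t⟫_𝕜) x y =
      RCLike.re ⟪f x, fderiv ℝ g x y⟫_𝕜 + RCLike.re ⟪fderiv ℝ f x y, g x⟫_𝕜 := by
  have hD : HasFDerivAt (fun t => RCLike.re ⟪f t, g t⟫_𝕜)
      (RCLike.reCLM.comp (fderiv ℝ (fun t => ⟪f t, g t⟫_𝕜) x)) x :=
    RCLike.reCLM.hasFDerivAt.comp x (hf.inner 𝕜 hg).hasFDerivAt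
  rw [hD.fderiv]
  simp [fderiv_inner_apply 𝕜 hf hg]

lemma fderiv_norm_sq_comp_apply (hf : DifferentiableAt ℝ f x) (y : G) :
    fderiv ℝ (fun t => ‖f t‖ ^ 2) x y = 2 * RCLike.re ⟪fderiv ℝ f x y, f x⟫_𝕜 := by
  have hnorm : (fun t => ‖f t‖ ^ 2) = fun t => RCLike.re ⟪f t, f t⟫_𝕜 :=
    funext fun t => (inner_self_eq_norm_sq (f t)).symm
  rw [hnorm, fderiv_re_inner_apply hf hf, inner_re_symm (f x)]
  ring

end NormSq

lemma fderiv_real_apply_eq_smul_deriv {F : Type*} [NormedAddCommGroup F] [NormedSpace ℂ F]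
    {f : ℂ → F} {z : ℂ} (hf : DifferentiableAt ℂ f z) (v : ℂ) :
    fderiv ℝ f z v = v • deriv f z := by
  rw [hf.fderiv_restrictScalars ℝ]
  exact fderiv_eq_smul_deriv v

section Holomorphic

variable {H : Type*} [NormedAddCommGroup H] [InnerProductSpace ℂ H] {h : ℂ → H} {z : ℂ}

lemma fderiv_norm_sq_comp_apply_complex (hh : DifferentiableAt ℂ h z) (v : ℂ) :
    fderiv ℝ (fun w => ‖h w‖ ^ 2) z v = 2 * (⟪v • deriv h z, h z⟫_ℂ).re := by
  rw [fderiv_norm_sq_comp_apply (𝕜 := ℂ) (hh.restrictScalars ℝ),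
    fderiv_real_apply_eq_smul_deriv hh]
  rfl

lemma mul_fderiv_norm_sq_add_mul_sq_le (hh : DifferentiableAt ℂ h z) (a b : ℝ) :
    (a * fderiv ℝ (fun w => ‖h w‖ ^ 2) z 1 + b * fderiv ℝ (fun w => ‖h w‖ ^ 2) z I) ^ 2
      ≤
      (a ^ 2 + b ^ 2) * ‖h z‖ ^ 2 * (4 * ‖deriv h z‖ ^ 2) := by
  have hCS : ‖⟪deriv h z, h z⟫_ℂ‖ ^ 2 ≤ (‖deriv h z‖ * ‖h z‖) ^ 2 :=
    pow_le_pow_left₀ (norm_nonneg _) (norm_inner_le_norm _ _) 2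
  rw [Complex.sq_norm, Complex.normSq_apply] at hCS
  rw [fderiv_norm_sq_comp_apply_complex hh, fderiv_norm_sq_comp_apply_complex hh]
  simp only [one_smul, inner_smul_left, Complex.conj_I, Complex.mul_re, Complex.neg_re,
    Complex.neg_im, Complex.I_re, Complex.I_im]
  nlinarith [sq_nonneg (a * (⟪deriv h z, h z⟫_ℂ).im - b * (⟪deriv h z, h z⟫_ℂ).re),
    mul_le_mul_of_nonneg_left hCS (by positivity : 0 ≤ a ^ 2 + b ^ 2)]

variable [CompleteSpace H]

lemma secondDirDeriv_norm_sq (hh : AnalyticAt ℂ h z) (v : ℂ) :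
    secondDirDeriv (fun w => ‖h w‖ ^ 2) z v =
      2 * (‖v • deriv h z‖ ^ 2 + (⟪v • v • deriv (deriv h) z, h z⟫_ℂ).re) := by
  have hD : (fun w => fderiv ℝ (fun w => ‖h w‖ ^ 2) w v) =ᶠ[𝓝 z]
      fun w => 2 * (⟪v • deriv h w, h w⟫_ℂ).re := by
    filter_upwards [hh.eventually_analyticAt] with w hw
    exact fderiv_norm_sq_comp_apply_complex hw.differentiableAt v
  have hh₁ := hh.differentiableAt
  have hh₂ := hh.deriv.differentiableAt
  have hvh₂ : DifferentiableAt ℝ (fun w => v • deriv h w) z :=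
    (hh₂.restrictScalars ℝ).const_smul v
  have hre : DifferentiableAt ℝ (fun w => (⟪v • deriv h w, h w⟫_ℂ).re) z :=
    reCLM.differentiableAt.comp z (hvh₂.inner ℂ (hh₁.restrictScalars ℝ))
  have hD₂ := fderiv_re_inner_apply (𝕜 := ℂ) hvh₂ (hh₁.restrictScalars ℝ) v
  simp only [RCLike.re_to_complex] at hD₂
  rw [secondDirDeriv, hD.fderiv_eq, fderiv_const_mul hre, smul_apply, smul_eq_mul, hD₂,
    fderiv_fun_const_smul (hh₂.restrictScalars ℝ), smul_apply,
    fderiv_real_apply_eq_smul_deriv hh₁, fderiv_real_apply_eq_smul_deriv hh₂,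
    ← inner_self_eq_norm_sq (𝕜 := ℂ)]
  rfl

lemma secondDirDeriv_norm_sq_one_add_I (hh : AnalyticAt ℂ h z) :
    secondDirDeriv (fun w => ‖h w‖ ^ 2) z 1 + secondDirDeriv (fun w => ‖h w‖ ^ 2) z I =
      4 * ‖deriv h z‖ ^ 2 := by
  rw [secondDirDeriv_norm_sq hh, secondDirDeriv_norm_sq hh]
  simp only [one_smul, norm_smul, norm_I, one_mul, smul_smul, I_mul_I, neg_smul, inner_neg_left,
    neg_re]
  ring

end Holomorphic

/-- `r * s + 2 * q * x + p * t` is the trace of the product of the positive semidefinite matrices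
`[[p, q], [q, r]]` and `[[t, x], [x, s]]`. -/
lemma add_two_mul_add_nonneg_of_sq_le_mul {p q r s t x : ℝ} (hp : 0 ≤ p) (hr : 0 ≤ r)
    (hs : 0 ≤ s) (ht : 0 ≤ t) (hq : q ^ 2 ≤ p * r) (hx : x ^ 2 ≤ s * t) :
    0 ≤ r * s + 2 * q * x + p * t := by
  have hsq : (2 * q * x) ^ 2 ≤ (r * s + p * t) ^ 2 := by
    nlinarith [mul_le_mul hq hx (sq_nonneg x) (mul_nonneg hp hr), sq_nonneg (r * s - p * t)]
  linarith [(abs_le_of_sq_le_sq' hsq (by positivity)).1]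

theorem stmt18_general {H : Type*} [NormedAddCommGroup H] [InnerProductSpace ℂ H] [CompleteSpace H]
    (M : ℝ → ℝ) (hM : ContDiff ℝ 2 M)
    (hM0 : ∀ x ≤ (0:ℝ), 0 ≤ M x)
    (hM2 : ∀ x ≤ (0:ℝ), 0 ≤ deriv (deriv M) x)
    (hMdet : ∀ x ≤ (0:ℝ), (deriv M x)^2 ≤ M x * deriv (deriv M) x)
    (U : Set ℂ) (hU : IsOpen U)
    (u : ℂ → ℝ) (hu : ContDiffOn ℝ 2 (fun z => u z) U)
    (hu0 : ∀ z ∈ U, u z ≤ 0)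
    (h : ℂ → H) (hh : DifferentiableOn ℂ h U) :
    ∀ z ∈ U,
      deriv M (u z) * (lap (fun w => ((u w : ℝ) : ℂ)) z).re * ‖h z‖^2 ≤
        (lap (fun w => ((M (u w) * ‖h w‖^2 : ℝ) : ℂ)) z).re := by
  intro z hz
  have hu₂ : ContDiffAt ℝ 2 u z := hu.contDiffAt (hU.mem_nhds hz)
  have hhz : AnalyticAt ℂ h z := hh.analyticAt (hU.mem_nhds hz)
  have hφ : ContDiffAt ℝ 2 (fun w => ‖h w‖ ^ 2) z :=
    (hhz.contDiffAt.restrict_scalars ℝ).norm_sq ℂ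
  have hMu : ContDiffAt ℝ 2 (fun w => M (u w)) z := hM.contDiffAt.comp z hu₂
  have hDMu := fderiv_comp_apply_eq_deriv_mul (hM.differentiable two_ne_zero (u z))
    (hu₂.differentiableAt two_ne_zero)
  have hcross := mul_fderiv_norm_sq_add_mul_sq_le hhz.differentiableAt
    (fderiv ℝ u z 1) (fderiv ℝ u z I)
  have hquad := add_two_mul_add_nonneg_of_sq_le_mul (hM0 _ (hu0 z hz)) (hM2 _ (hu0 z hz))
    (by positivity) (by positivity) (hMdet _ (hu0 z hz)) hcross
  rw [re_lap_ofReal hu₂, re_lap_ofReal (hMu.mul hφ), secondDirDeriv_mul hMu hφ,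
    secondDirDeriv_mul hMu hφ, secondDirDeriv_comp hM hu₂, secondDirDeriv_comp hM hu₂,
    hDMu, hDMu]
  linear_combination hquad / 4 - M (u z) * secondDirDeriv_norm_sq_one_add_I hhz / 4

/-- for `M` with `[[M,M'],[M',M'']] ≥ 0` on `(-∞,0]`, `u ≤ 0` C²
subharmonic, and `h` holomorphic Hilbert-space valued,
`Δ(M(u)‖h‖²) ≥ M'(u)·Δu·‖h‖²` pointwise. -/
theorem stmt18 {H : Type*} [NormedAddCommGroup H] [InnerProductSpace ℂ H] [CompleteSpace H]
    (M : ℝ → ℝ) (hM : ContDiff ℝ 2 M)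
    (hM0 : ∀ x ≤ (0:ℝ), 0 ≤ M x)
    (hM1 : ∀ x ≤ (0:ℝ), 0 ≤ deriv M x)
    (hM2 : ∀ x ≤ (0:ℝ), 0 ≤ deriv (deriv M) x)
    (hMdet : ∀ x ≤ (0:ℝ), (deriv M x)^2 ≤ M x * deriv (deriv M) x)
    (U : Set ℂ) (hU : IsOpen U)
    (u : ℂ → ℝ) (hu : ContDiffOn ℝ 2 (fun z => u z) U)
    (hu0 : ∀ z ∈ U, u z ≤ 0)
    (husub : ∀ z ∈ U, 0 ≤ (lap (fun w => ((u w : ℝ) : ℂ)) z).re)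
    (h : ℂ → H) (hh : DifferentiableOn ℂ h U) :
    ∀ z ∈ U,
      deriv M (u z) * (lap (fun w => ((u w : ℝ) : ℂ)) z).re * ‖h z‖^2 ≤
        (lap (fun w => ((M (u w) * ‖h w‖^2 : ℝ) : ℂ)) z).re :=
  stmt18_general M hM hM0 hM2 hMdet U hU u hu hu0 h hh
end
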